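/- Let n ≥ 1, let A and B be Hermitian n×n complex matrices all of whose eigenvalues lie in the open interval (−1,1), let f, g ∈ 𝔥, and let X be an arbitrary n×n complex matrix. Then for each choice of sign ε ∈ {+1, −1}, ‖f(A)Xg(B) + ε·X‖₂ ≤ ‖(1/(d_A d_B))·(I + |A|)X(I + |B|) + X‖₂, where I is the n×n identity matrix. -/

import Mathlib

open Matrix
open scoped ComplexOrder

/-- `f(A)` for a Hermitian matrix `A`, defined via the spectral decomposition:
`f(A) = U diag(f(λ₁),…,f(λₙ)) U*`. -/
noncomputable def herFun {n : ℕ} {A : Matrix (Fin n) (Fin n) ℂ} (hA : A.IsHermitian)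
    (f : ℂ → ℂ) : Matrix (Fin n) (Fin n) ℂ :=
  (hA.eigenvectorUnitary : Matrix (Fin n) (Fin n) ℂ) *
    Matrix.diagonal (fun i => f (hA.eigenvalues i : ℂ)) *
    star (hA.eigenvectorUnitary : Matrix (Fin n) (Fin n) ℂ)

/-- `|X| = (X*X)^{1/2}`, the positive semidefinite absolute value of a matrix. -/
noncomputable def matAbs {n : ℕ} (X : Matrix (Fin n) (Fin n) ℂ) : Matrix (Fin n) (Fin n) ℂ :=
  ((Matrix.posSemidef_conjTranspose_mul_self X).1.eigenvectorUnitary : Matrix (Fin n) (Fin n) ℂ) *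
    Matrix.diagonal ((↑) ∘ (√·) ∘ (Matrix.posSemidef_conjTranspose_mul_self X).1.eigenvalues) *
    (star (Matrix.posSemidef_conjTranspose_mul_self X).1.eigenvectorUnitary : Matrix (Fin n) (Fin n) ℂ)

/-- `d_A = min { 1 - |λⱼ| }`, the distance from the unit circle to the spectrum of a
Hermitian matrix `A` whose eigenvalues lie in `(-1,1)`. -/
noncomputable def dDist {n : ℕ} {A : Matrix (Fin n) (Fin n) ℂ} (hA : A.IsHermitian) : ℝ :=
  ⨅ i, (1 - |hA.eigenvalues i|)

/-- Membership in the class `𝔥`: analytic on the open unit disk, positive real part there,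
and value `1` at the origin. -/
def MemH (f : ℂ → ℂ) : Prop :=
  DifferentiableOn ℂ f (Metric.ball (0 : ℂ) 1) ∧
    (∀ z ∈ Metric.ball (0 : ℂ) 1, 0 < (f z).re) ∧ f 0 = 1

/-- A function `N` on `n × n` complex matrices is a unitarily invariant norm. -/
def IsUnitarilyInvariantNorm {m : Type*} [Fintype m] [DecidableEq m]
    (N : Matrix m m ℂ → ℝ) : Prop :=
  (∀ X, N X = 0 ↔ X = 0) ∧
    (∀ (c : ℂ) X, N (c • X) = ‖c‖ * N X) ∧
    (∀ X Y, N (X + Y) ≤ N X + N Y) ∧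
    (∀ (U V : Matrix.unitaryGroup m ℂ) (X : Matrix m m ℂ),
      N ((U : Matrix m m ℂ) * X * (V : Matrix m m ℂ)) = N X)
/-- The Frobenius (Hilbert–Schmidt, Schatten 2-) norm of a matrix. -/
noncomputable def frobNorm {n : ℕ} (X : Matrix (Fin n) (Fin n) ℂ) : ℝ :=
  Real.sqrt (∑ i, ∑ j, ‖X i j‖ ^ 2)

/-! Conjugating by the eigenvector unitaries `U` of `A` and `V` of `B`, which preserves the
Frobenius norm, turns `f(A) X g(B) + ε X` into the Schur product of `Y = U* X V` with the matrix
`(f(λᵢ) g(μⱼ) + ε)ᵢⱼ`, and the right-hand side into the Schur product of `Y` with the nonnegative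
matrix `((1 + |λᵢ|)(1 + |μⱼ|) / (d_A d_B) + 1)ᵢⱼ`. It therefore suffices to compare the two weights
entrywise, which follows from Harnack's bound `|f z| ≤ (1 + |z|) / (1 - |z|)` for `f ∈ 𝔥` and
`1 - |λᵢ| ≥ d_A`. -/

open Metric Set

namespace Complex

lemma norm_sub_one_lt_norm_add_one {w : ℂ} (hw : 0 < w.re) : ‖w - 1‖ < ‖w + 1‖ := by
  rw [← sq_lt_sq₀ (norm_nonneg _) (norm_nonneg _), Complex.sq_norm, Complex.sq_norm,
    normSq_apply, normSq_apply]
  simp only [sub_re, sub_im, add_re, add_im, one_re, one_im]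
  nlinarith

lemma norm_le_of_norm_cayley_le {w : ℂ} (hw : 0 < w.re) {r : ℝ} (hr : r < 1)
    (h : ‖(w - 1) / (w + 1)‖ ≤ r) : ‖w‖ ≤ (1 + r) / (1 - r) := by
  set t := (w - 1) / (w + 1)
  have hw1 : w + 1 ≠ 0 :=
    norm_pos_iff.mp ((norm_nonneg _).trans_lt (norm_sub_one_lt_norm_add_one hw))
  have hwt : w * (1 - t) = 1 + t := by
    simp only [t]
    field_simp
    ring
  have hnum : ‖1 + t‖ ≤ 1 + r := (norm_add_le _ _).trans (by simpa using h)
  have hden : 1 - r ≤ ‖1 - t‖ := by linarith [norm_sub_norm_le (1 : ℂ) t, norm_one (α := ℂ)]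
  rw [le_div_iff₀ (by linarith)]
  calc ‖w‖ * (1 - r) ≤ ‖w‖ * ‖1 - t‖ := by gcongr
    _ = ‖1 + t‖ := by rw [← norm_mul, hwt]
    _ ≤ 1 + r := hnum

end Complex

/-- Harnack's inequality: the Cayley transform `(f - 1) / (f + 1)` maps the disk to itself and
fixes `0`, so the Schwarz lemma bounds it by `‖z‖`. -/
lemma MemH.norm_le {f : ℂ → ℂ} (hf : MemH f) {z : ℂ} (hz : ‖z‖ < 1) :
    ‖f z‖ ≤ (1 + ‖z‖) / (1 - ‖z‖) := by
  obtain ⟨hd, hre, h0⟩ := hf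
  have hne : ∀ w ∈ ball (0 : ℂ) 1, f w + 1 ≠ 0 := fun w hw h => by
    linarith [hre w hw, show (f w).re = -1 by simp [eq_neg_of_add_eq_zero_left h]]
  have hmaps : MapsTo (fun w => (f w - 1) / (f w + 1)) (ball 0 1) (closedBall 0 1) := fun w hw => by
    rw [mem_closedBall_zero_iff, norm_div]
    exact div_le_one_of_le₀ (Complex.norm_sub_one_lt_norm_add_one (hre w hw)).le (norm_nonneg _)
  have hschwarz := Complex.norm_le_norm_of_mapsTo_ball
    ((hd.sub_const 1).div (hd.add_const 1) hne) hmaps (by simp [h0]) hz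
  exact Complex.norm_le_of_norm_cayley_le (hre z (mem_ball_zero_iff.mpr hz)) hz hschwarz

lemma sum_sum_norm_sq_eq_re_trace {m n : Type*} [Fintype m] [Fintype n] (M : Matrix m n ℂ) :
    ∑ i, ∑ j, ‖M i j‖ ^ 2 = (Mᴴ * M).trace.re := by
  simp only [Matrix.trace, diag_apply, mul_apply, conjTranspose_apply, Complex.re_sum,
    Complex.star_def, Complex.conj_mul']
  rw [Finset.sum_comm]
  norm_cast

lemma frobNorm_mul_mul_of_mem_unitaryGroup {n : ℕ} {U V : Matrix (Fin n) (Fin n) ℂ}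
    (hU : U ∈ unitaryGroup (Fin n) ℂ) (hV : V ∈ unitaryGroup (Fin n) ℂ)
    (M : Matrix (Fin n) (Fin n) ℂ) : frobNorm (U * M * V) = frobNorm M := by
  have hUM : (U * M * V)ᴴ * (U * M * V) = Vᴴ * (Mᴴ * M) * V := by
    simp only [conjTranspose_mul, Matrix.mul_assoc]
    rw [← Matrix.mul_assoc Uᴴ U, ← star_eq_conjTranspose U, Unitary.star_mul_self_of_mem hU,
      Matrix.one_mul]
  simp only [frobNorm, sum_sum_norm_sq_eq_re_trace]
  rw [hUM, trace_mul_cycle, ← star_eq_conjTranspose V, Unitary.mul_star_self_of_mem hV,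
    Matrix.one_mul]

lemma frobNorm_le_of_norm_apply_le {n : ℕ} {M N : Matrix (Fin n) (Fin n) ℂ}
    (h : ∀ i j, ‖M i j‖ ≤ ‖N i j‖) : frobNorm M ≤ frobNorm N :=
  Real.sqrt_le_sqrt <| Finset.sum_le_sum fun i _ => Finset.sum_le_sum fun j _ =>
    pow_le_pow_left₀ (norm_nonneg _) (h i j) 2

lemma star_mul_conj_diagonal_mul_conj_diagonal_mul {m R : Type*} [Fintype m] [DecidableEq m]
    [CommRing R] [StarRing R] {U V : Matrix m m R} (hU : U ∈ unitaryGroup m R)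
    (hV : V ∈ unitaryGroup m R) (d e : m → R) (X : Matrix m m R) :
    star U * (U * diagonal d * star U * X * (V * diagonal e * star V)) * V =
      diagonal d * (star U * X * V) * diagonal e := by
  simp only [Matrix.mul_assoc, ← Matrix.mul_assoc (star U) U,
    Unitary.star_mul_self_of_mem hU, Unitary.star_mul_self_of_mem hV, Matrix.one_mul,
    Matrix.mul_one]

open scoped MatrixOrder in
lemma matAbs_eq_abs {n : ℕ} (A : Matrix (Fin n) (Fin n) ℂ) : matAbs A = CFC.abs A := by
  have hsqrt : matAbs A = cfc Real.sqrt (Aᴴ * A) := by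
    rw [(posSemidef_conjTranspose_mul_self A).1.cfc_eq, IsHermitian.cfc,
      Unitary.conjStarAlgAut_apply]
    rfl
  rw [hsqrt, ← star_eq_conjTranspose, ← cfcₙ_eq_cfc,
    ← CFC.sqrt_eq_real_sqrt _ (star_mul_self_nonneg A), CFC.abs]

open scoped MatrixOrder in
lemma one_add_matAbs_eq {n : ℕ} {A : Matrix (Fin n) (Fin n) ℂ} (hA : A.IsHermitian) :
    1 + matAbs A = (hA.eigenvectorUnitary : Matrix (Fin n) (Fin n) ℂ) *
      diagonal (fun i => ((1 + |hA.eigenvalues i| : ℝ) : ℂ)) *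
      star (hA.eigenvectorUnitary : Matrix (Fin n) (Fin n) ℂ) := by
  rw [matAbs_eq_abs, CFC.abs_eq_cfc_norm A hA.isSelfAdjoint, ← map_one (algebraMap ℝ _),
    ← cfc_const_add 1 (‖·‖) A, hA.cfc_eq, IsHermitian.cfc, Unitary.conjStarAlgAut_apply]
  simp only [Function.comp_def, Real.norm_eq_abs]
  rfl

lemma MemH.norm_mul_add_le {f g : ℂ → ℂ} (hf : MemH f) (hg : MemH g) {x y : ℂ} {dx dy : ℝ}
    (hdx : 0 < dx) (hx : dx ≤ 1 - ‖x‖) (hdy : 0 < dy) (hy : dy ≤ 1 - ‖y‖) {ε : ℂ}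
    (hε : ‖ε‖ ≤ 1) : ‖f x * g y + ε‖ ≤ (dx * dy)⁻¹ * ((1 + ‖x‖) * (1 + ‖y‖)) + 1 := by
  have hfx : ‖f x‖ ≤ (1 + ‖x‖) / dx :=
    (hf.norm_le (by linarith)).trans (div_le_div_of_nonneg_left (by positivity) hdx hx)
  have hgy : ‖g y‖ ≤ (1 + ‖y‖) / dy :=
    (hg.norm_le (by linarith)).trans (div_le_div_of_nonneg_left (by positivity) hdy hy)
  calc ‖f x * g y + ε‖ ≤ ‖f x‖ * ‖g y‖ + 1 := (norm_add_le _ _).trans (by rw [norm_mul]; gcongr)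
    _ ≤ (1 + ‖x‖) / dx * ((1 + ‖y‖) / dy) + 1 := by gcongr
    _ = (dx * dy)⁻¹ * ((1 + ‖x‖) * (1 + ‖y‖)) + 1 := by ring

lemma MemH.norm_mul_mul_add_smul_le {f g : ℂ → ℂ} (hf : MemH f) (hg : MemH g) {x y dx dy : ℝ}
    (hdx : 0 < dx) (hx : dx ≤ 1 - |x|) (hdy : 0 < dy) (hy : dy ≤ 1 - |y|) {ε : ℂ}
    (hε : ‖ε‖ ≤ 1) (z : ℂ) :
    ‖f x * z * g y + ε • z‖ ≤
      ‖(dx * dy)⁻¹ • (((1 + |x| : ℝ) : ℂ) * z * ((1 + |y| : ℝ) : ℂ)) + z‖ := by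
  have hfg := hf.norm_mul_add_le hg (x := x) (y := y) hdx (by simpa using hx) hdy
    (by simpa using hy) hε
  rw [Complex.norm_real, Complex.norm_real, Real.norm_eq_abs, Real.norm_eq_abs] at hfg
  have hrhs : (dx * dy)⁻¹ • (((1 + |x| : ℝ) : ℂ) * z * ((1 + |y| : ℝ) : ℂ)) + z =
      (((dx * dy)⁻¹ * ((1 + |x|) * (1 + |y|)) + 1 : ℝ) : ℂ) * z := by
    rw [Complex.real_smul]
    push_cast
    ring
  calc ‖f x * z * g y + ε • z‖ = ‖f x * g y + ε‖ * ‖z‖ := by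
        rw [← norm_mul, smul_eq_mul]
        ring_nf
    _ ≤ ((dx * dy)⁻¹ * ((1 + |x|) * (1 + |y|)) + 1) * ‖z‖ := by gcongr
    _ = _ := by rw [hrhs, norm_mul, Complex.norm_of_nonneg (by positivity)]

section dDist

variable {n : ℕ} {A : Matrix (Fin n) (Fin n) ℂ} (hA : A.IsHermitian)

lemma dDist_le (i : Fin n) : dDist hA ≤ 1 - |hA.eigenvalues i| :=
  ciInf_le (Finite.bddBelow_range _) i

lemma dDist_pos [Nonempty (Fin n)] (hAspec : ∀ i, |hA.eigenvalues i| < 1) : 0 < dDist hA := by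
  obtain ⟨i, hi⟩ := exists_eq_ciInf_of_finite (f := fun i => 1 - |hA.eigenvalues i|)
  rw [dDist, ← hi]
  linarith [hAspec i]

end dDist

theorem stmt14_general {n : ℕ}
    {A B : Matrix (Fin n) (Fin n) ℂ} (hA : A.IsHermitian) (hB : B.IsHermitian)
    (hAspec : ∀ i, |hA.eigenvalues i| < 1) (hBspec : ∀ i, |hB.eigenvalues i| < 1)
    {f g : ℂ → ℂ} (hf : MemH f) (hg : MemH g)
    (X : Matrix (Fin n) (Fin n) ℂ) (ε : ℂ) (hε : ε = 1 ∨ ε = -1) :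
    frobNorm (herFun hA f * X * herFun hB g + ε • X) ≤
      frobNorm ((dDist hA * dDist hB)⁻¹ • ((1 + matAbs A) * X * (1 + matAbs B)) + X) := by
  have hU := hA.eigenvectorUnitary.2
  have hV := hB.eigenvectorUnitary.2
  rw [herFun, herFun, one_add_matAbs_eq hA, one_add_matAbs_eq hB,
    ← frobNorm_mul_mul_of_mem_unitaryGroup (Unitary.star_mem hU) hV,
    ← frobNorm_mul_mul_of_mem_unitaryGroup (Unitary.star_mem hU) hV (_ + X)]
  refine frobNorm_le_of_norm_apply_le fun i j => ?_
  have : Nonempty (Fin n) := ⟨i⟩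
  simp only [Matrix.mul_add, Matrix.add_mul, Matrix.mul_smul, Matrix.smul_mul,
    star_mul_conj_diagonal_mul_conj_diagonal_mul hU hV, Matrix.add_apply, Matrix.smul_apply,
    diagonal_mul, mul_diagonal]
  exact hf.norm_mul_mul_add_smul_le hg (dDist_pos hA hAspec) (dDist_le hA i) (dDist_pos hB hBspec)
    (dDist_le hB j) (by rcases hε with rfl | rfl <;> simp) _

/-- **Theorem 3.3 (second inequality).** -/
theorem stmt14 {n : ℕ} (hn : 1 ≤ n)
    {A B : Matrix (Fin n) (Fin n) ℂ} (hA : A.IsHermitian) (hB : B.IsHermitian)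
    (hAspec : ∀ i, |hA.eigenvalues i| < 1) (hBspec : ∀ i, |hB.eigenvalues i| < 1)
    {f g : ℂ → ℂ} (hf : MemH f) (hg : MemH g)
    (X : Matrix (Fin n) (Fin n) ℂ) (ε : ℂ) (hε : ε = 1 ∨ ε = -1) :
    frobNorm (herFun hA f * X * herFun hB g + ε • X) ≤
      frobNorm ((dDist hA * dDist hB)⁻¹ • ((1 + matAbs A) * X * (1 + matAbs B)) + X) :=
  stmt14_general hA hB hAspec hBspec hf hg X ε hε
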